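/- arXiv:1006.4319 — 2 statements merged into one kernel-verified Lean document; each statement's English description precedes it below -/
import Mathlib

section
/- For all φ, ψ, α, β ∈ [0, π/2], the quantity Γ(φ,ψ,α,β) = cos φ cos ψ cos α cos β + sin φ sin ψ sin α sin β + sin(φ+ψ) sin(α+β) satisfies Γ ≤ 3/2, with equality if and only if φ = ψ = α = β = π/4. -/
/-!
Since `cos (φ - ψ) cos (α - β) + cos (φ + ψ) cos (α + β)` is twice the sum of the first two
terms of `Γ`, and `cos (φ + ψ) cos (α + β) + sin (φ + ψ) sin (α + β) = cos ((φ + ψ) - (α + β))`,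
`2 Γ = cos (φ - ψ) cos (α - β) + cos ((φ + ψ) - (α + β)) + sin (φ + ψ) sin (α + β)`.
On `[0, π/2]⁴` both products are products of two numbers in `[0, 1]`, so each of the three
terms is at most `1`, and equality forces `φ = ψ`, `α = β` and `φ + ψ = α + β = π / 2`.
-/

open Real Set

lemma eq_one_and_eq_one_of_mul_eq_one {R : Type*} [Semiring R] [LinearOrder R]
    [IsStrictOrderedRing R] {a b : R} (ha₀ : 0 ≤ a) (ha₁ : a ≤ 1) (hb₀ : 0 ≤ b) (hb₁ : b ≤ 1)
    (h : a * b = 1) : a = 1 ∧ b = 1 := by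
  refine ⟨ha₁.eq_of_not_lt fun ha => ?_, hb₁.eq_of_not_lt fun hb => ?_⟩
  · exact (mul_lt_one_of_nonneg_of_lt_one_left ha₀ ha hb₁).ne h
  · exact (mul_lt_one_of_nonneg_of_lt_one_right ha₁ hb₀ hb).ne h

lemma two_mul_gamma_eq (φ ψ α β : ℝ) :
    2 * (cos φ * cos ψ * cos α * cos β + sin φ * sin ψ * sin α * sin β
      + sin (φ + ψ) * sin (α + β)) =
    cos (φ - ψ) * cos (α - β) + cos (φ + ψ - (α + β)) + sin (φ + ψ) * sin (α + β) := by
  rw [cos_sub (φ + ψ), cos_add φ, cos_add α, cos_sub φ, cos_sub α]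
  ring

section QuarterTurn

variable {x y : ℝ} (hx : x ∈ Icc 0 (π / 2)) (hy : y ∈ Icc 0 (π / 2))
include hx hy

lemma cos_sub_nonneg_of_mem_Icc : 0 ≤ cos (x - y) :=
  cos_nonneg_of_mem_Icc ⟨by linarith [hx.1, hy.2], by linarith [hx.2, hy.1]⟩

lemma sin_add_nonneg_of_mem_Icc : 0 ≤ sin (x + y) :=
  sin_nonneg_of_nonneg_of_le_pi (by linarith [hx.1, hy.1]) (by linarith [hx.2, hy.2])

lemma eq_of_cos_sub_eq_one (h : cos (x - y) = 1) : x = y := by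
  have := pi_pos
  have hxy := (cos_eq_one_iff_of_lt_of_lt (x := x - y) (by linarith [hx.1, hy.2])
    (by linarith [hx.2, hy.1])).1 h
  linarith

lemma add_eq_pi_div_two_of_sin_add_eq_one (h : sin (x + y) = 1) : x + y = π / 2 := by
  have := pi_pos
  rw [← cos_sub_pi_div_two] at h
  have hxy := (cos_eq_one_iff_of_lt_of_lt (by linarith [hx.1, hy.1])
    (by linarith [hx.2, hy.2])).1 h
  linarith

end QuarterTurn

theorem stmt_0 (φ ψ α β : ℝ)
    (hφ : φ ∈ Set.Icc 0 (π / 2)) (hψ : ψ ∈ Set.Icc 0 (π / 2))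
    (hα : α ∈ Set.Icc 0 (π / 2)) (hβ : β ∈ Set.Icc 0 (π / 2)) :
    cos φ * cos ψ * cos α * cos β + sin φ * sin ψ * sin α * sin β
      + sin (φ + ψ) * sin (α + β) ≤ 3 / 2 ∧
    (cos φ * cos ψ * cos α * cos β + sin φ * sin ψ * sin α * sin β
      + sin (φ + ψ) * sin (α + β) = 3 / 2 ↔
      φ = π / 4 ∧ ψ = π / 4 ∧ α = π / 4 ∧ β = π / 4) := by
  have hΓ := two_mul_gamma_eq φ ψ α β
  have hcos := mul_le_one₀ (cos_le_one (φ - ψ)) (cos_sub_nonneg_of_mem_Icc hα hβ) (cos_le_one _)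
  have hsin := mul_le_one₀ (sin_le_one (φ + ψ)) (sin_add_nonneg_of_mem_Icc hα hβ) (sin_le_one _)
  have hdiff := cos_le_one (φ + ψ - (α + β))
  refine ⟨by linarith, fun h => ?_, ?_⟩
  · obtain ⟨hcos_φψ, hcos_αβ⟩ := eq_one_and_eq_one_of_mul_eq_one (cos_sub_nonneg_of_mem_Icc hφ hψ)
      (cos_le_one _) (cos_sub_nonneg_of_mem_Icc hα hβ) (cos_le_one _) (by linarith)
    obtain ⟨hsin_φψ, hsin_αβ⟩ := eq_one_and_eq_one_of_mul_eq_one (sin_add_nonneg_of_mem_Icc hφ hψ)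
      (sin_le_one _) (sin_add_nonneg_of_mem_Icc hα hβ) (sin_le_one _) (by linarith)
    have hφ_eq_ψ := eq_of_cos_sub_eq_one hφ hψ hcos_φψ
    have hα_eq_β := eq_of_cos_sub_eq_one hα hβ hcos_αβ
    have hφψ_sum := add_eq_pi_div_two_of_sin_add_eq_one hφ hψ hsin_φψ
    have hαβ_sum := add_eq_pi_div_two_of_sin_add_eq_one hα hβ hsin_αβ
    refine ⟨?_, ?_, ?_, ?_⟩ <;> linarith
  · rintro ⟨rfl, rfl, rfl, rfl⟩
    simp only [show π / 4 + π / 4 = π / 2 by ring, sub_self, cos_zero, sin_pi_div_two] at hΓ ⊢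
    linarith
end

section
/- In any metric space, any finite set S of cardinality N ≥ 2 and diameter r > 0 can be partitioned into two disjoint nonempty subsets S' and S'' with dist(S', S'') ≥ r/(2N). Moreover, given two points s', s'' ∈ S with dist(s', s'') = r, the partition can be chosen so that s' ∈ S' and s'' ∈ S''. -/
/-! The `N - 1` distances from `s'` to the other points of `S` cannot meet all `N` shells
`(k δ, (k + 1) δ]`, `δ = r / N`, around `s'`; the last shell reaches `r = dist s' s''`.
Splitting `S` at the inner radius of an empty shell puts `s'` and `s''` on different sides, and
the triangle inequality through `s'` separates the two sides by `δ ≥ r / (2N)`. -/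

open Function Set

theorem Finset.exists_forall_notMem_of_card_lt {α ι : Type*} {D : Finset α} {t : Finset ι}
    {I : ι → Set α} (hI : Pairwise (Disjoint on I)) (hcard : D.card < t.card) :
    ∃ i ∈ t, ∀ x ∈ D, x ∉ I i := by
  by_contra! hhit
  obtain ⟨i₀, hi₀⟩ := Finset.card_pos.mp (D.card.zero_le.trans_lt hcard)
  have : Nonempty α := ⟨(hhit i₀ hi₀).choose⟩
  choose! f hfD hfI using hhit
  refine hcard.not_ge (Finset.card_le_card_of_injOn f hfD fun i hi j hj hij => ?_)
  by_contra hne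
  exact (hI hne).notMem_of_mem_left (hfI i hi) (hij ▸ hfI j hj)

theorem pairwise_disjoint_Ioc_natCast_mul {α : Type*} [Ring α] [PartialOrder α]
    [IsOrderedRing α] (δ : α) :
    Pairwise (Disjoint on fun k : ℕ => Ioc (k * δ) ((k + 1) * δ)) := by
  intro k l hkl
  simpa [onFun, zsmul_eq_mul] using pairwise_disjoint_Ioc_add_zsmul (0 : α) δ (Nat.cast_injective.ne hkl)

theorem Finset.exists_forall_dist_notMem_Ioc {X : Type*} [PseudoMetricSpace X] (S : Finset X)
    {c : X} (hc : c ∈ S) (δ : ℝ) :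
    ∃ k < S.card, ∀ x ∈ S, x ≠ c → dist c x ∉ Set.Ioc (k * δ) ((k + 1) * δ) := by
  classical
  have hcard : ((S.erase c).image (dist c)).card < (Finset.range S.card).card := by
    rw [Finset.card_range]
    exact Finset.card_image_le.trans_lt (Finset.card_erase_lt_of_mem hc)
  obtain ⟨k, hk, hgap⟩ :=
    Finset.exists_forall_notMem_of_card_lt (pairwise_disjoint_Ioc_natCast_mul δ) hcard
  exact ⟨k, Finset.mem_range.mp hk, fun x hx hxc =>
    hgap _ (Finset.mem_image_of_mem _ (Finset.mem_erase.mpr ⟨hxc, hx⟩))⟩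

theorem stmt_2_general {X : Type*} [MetricSpace X] [DecidableEq X] (S : Finset X) (r : ℝ)
    (hr : 0 < r)
    (s' s'' : X) (hs' : s' ∈ S) (hs'' : s'' ∈ S) (hdist : dist s' s'' = r) :
    ∃ S' S'' : Finset X, S' ∪ S'' = S ∧ Disjoint S' S'' ∧
      S'.Nonempty ∧ S''.Nonempty ∧ s' ∈ S' ∧ s'' ∈ S'' ∧
      ∀ x ∈ S', ∀ y ∈ S'', r / (2 * S.card) ≤ dist x y := by
  set N := S.card
  have hN : (0 : ℝ) < N := by exact_mod_cast Finset.card_pos.mpr ⟨s', hs'⟩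
  set δ := r / N
  have hδ : r = N * δ := (mul_div_cancel₀ r hN.ne').symm
  have hδ_pos : 0 < δ := div_pos hr hN
  obtain ⟨k, hkN, hgap⟩ := S.exists_forall_dist_notMem_Ioc hs' δ
  have hk : (k : ℝ) + 1 ≤ N := by exact_mod_cast hkN
  have hs'_near : dist s' s' ≤ k * δ := by rw [dist_self]; exact mul_nonneg k.cast_nonneg hδ_pos.le
  have hs''_far : ¬ dist s' s'' ≤ k * δ := by rw [hdist, hδ]; nlinarith
  refine ⟨S.filter (dist s' · ≤ k * δ), S.filter (¬ dist s' · ≤ k * δ),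
    Finset.filter_union_filter_not_eq _ S, Finset.disjoint_filter_filter_not S S _,
    ⟨s', Finset.mem_filter.mpr ⟨hs', hs'_near⟩⟩, ⟨s'', Finset.mem_filter.mpr ⟨hs'', hs''_far⟩⟩,
    Finset.mem_filter.mpr ⟨hs', hs'_near⟩, Finset.mem_filter.mpr ⟨hs'', hs''_far⟩, ?_⟩
  intro x hx y hy
  rw [Finset.mem_filter] at hx hy
  have hys' : y ≠ s' := by rintro rfl; exact hy.2 hs'_near
  have hy_far : (k + 1) * δ < dist s' y :=
    not_le.mp fun h => hgap y hy.1 hys' ⟨lt_of_not_ge hy.2, h⟩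
  calc r / (2 * N) ≤ δ := div_le_div_of_nonneg_left hr.le hN (by linarith)
    _ ≤ dist x y := by linarith [dist_triangle s' x y, hx.2]

theorem stmt_2 {X : Type*} [MetricSpace X] [DecidableEq X] (S : Finset X) (r : ℝ)
    (hN : 2 ≤ S.card) (hr : 0 < r)
    (hdiam : Metric.diam (S : Set X) = r)
    (s' s'' : X) (hs' : s' ∈ S) (hs'' : s'' ∈ S) (hdist : dist s' s'' = r) :
    ∃ S' S'' : Finset X, S' ∪ S'' = S ∧ Disjoint S' S'' ∧
      S'.Nonempty ∧ S''.Nonempty ∧ s' ∈ S' ∧ s'' ∈ S'' ∧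
      ∀ x ∈ S', ∀ y ∈ S'', r / (2 * S.card) ≤ dist x y :=
  stmt_2_general S r hr s' s'' hs' hs'' hdist
end
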